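/- Let c ∈ ℝ^d and let Δ ⊆ t* be a subset of the dual of a finite-dimensional real vector space, with π* : t* → (ℝ^d)* injective linear. The set of weights {c - b : b ∈ (ℤ_{≥0})^d} ∩ ker(ι*), where ι* : (ℝ^d)* → h* is the dual of the inclusion of h = ker(π) and where Δ = {ξ ∈ t* : ⟨ξ, v_i⟩ ≤ c_i for all i} with π(e_i) = v_i, equals π*(Δ) ∩ (c + ℤ^d). -/
import Mathlib

lemma pi_eq_sum {d : ℕ} {t : Type*} [AddCommGroup t] [Module ℝ t]
    (π : (Fin d → ℝ) →ₗ[ℝ] t) (u : Fin d → ℝ) :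
    π u = ∑ i, u i • π (Pi.single i 1) := by
  have : u = ∑ i, u i • (Pi.single i 1 : Fin d → ℝ) := by
    funext j
    simp [Finset.sum_apply, Pi.single_apply, mul_comm]
  conv_lhs => rw [this]
  simp

/-- Delzant/quasifold weight count: with `π : ℝ^d → t` surjective sending `e_i ↦ v_i`,
`h = ker π`, `Δ = {ξ ∈ t* | ⟨ξ, v_i⟩ ≤ c_i}`, and `p = π*` (under `(ℝ^d)* ≅ ℝ^d`), the set
`{c - b | b ∈ ℕ^d} ∩ ker ι*` equals `π*(Δ) ∩ (c + ℤ^d)`. -/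
theorem stmt10 {d : ℕ} {t : Type*} [AddCommGroup t] [Module ℝ t] [FiniteDimensional ℝ t]
    (v : Fin d → t) (c : Fin d → ℝ)
    (π : (Fin d → ℝ) →ₗ[ℝ] t) (hπ : Function.Surjective π)
    (hπv : ∀ i, π (Pi.single i 1) = v i)
    (Δ : Set (Module.Dual ℝ t)) (hΔ : Δ = {ξ : Module.Dual ℝ t | ∀ i, ξ (v i) ≤ c i})
    (p : Module.Dual ℝ t → (Fin d → ℝ)) (hp : ∀ ξ i, p ξ i = ξ (v i)) :
    {x : Fin d → ℝ | (∃ b : Fin d → ℕ, ∀ i, x i = c i - b i) ∧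
        ∀ u ∈ LinearMap.ker π, ∑ i, x i * u i = 0} =
      {x : Fin d → ℝ | x ∈ p '' Δ ∧ ∃ z : Fin d → ℤ, ∀ i, x i = c i + z i} := by
  ext x
  constructor
  · rintro ⟨⟨b, hb⟩, hker⟩
    obtain ⟨σ, hσ⟩ := π.exists_rightInverse_of_surjective (LinearMap.range_eq_top.2 hπ)
    -- functional ℓ u = ∑ x i * u i
    set ℓ : (Fin d → ℝ) →ₗ[ℝ] ℝ :=
      { toFun := fun u => ∑ i, x i * u i
        map_add' := by intro a b; simp [mul_add, Finset.sum_add_distrib]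
        map_smul' := by
          intro r a
          simp [Finset.mul_sum, mul_comm, mul_left_comm] } with hℓ
    set ξ : Module.Dual ℝ t := ℓ.comp σ with hξ
    have key : ∀ u : Fin d → ℝ, ξ (π u) = ∑ i, x i * u i := by
      intro u
      have hmem : σ (π u) - u ∈ LinearMap.ker π := by
        have h2 := LinearMap.congr_fun hσ (π u)
        simp only [LinearMap.mem_ker, map_sub]
        simp at h2
        rw [h2, sub_self]
      have h0 := hker _ hmem
      have : ℓ (σ (π u) - u) = 0 := by simpa [hℓ] using h0
      have := sub_eq_zero.mp (by simpa [map_sub] using this)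
      simpa [hξ, hℓ] using this
    have hξv : ∀ i, ξ (v i) = x i := by
      intro i
      rw [← hπv i, key]
      simp [Pi.single_apply, mul_comm]
    refine ⟨⟨ξ, ?_, ?_⟩, ⟨fun i => -(b i : ℤ), ?_⟩⟩
    · rw [hΔ]
      intro i
      rw [hξv i, hb i]
      have : (0:ℝ) ≤ (b i : ℝ) := Nat.cast_nonneg _
      linarith
    · funext i; rw [hp, hξv]
    · intro i; rw [hb i]; push_cast; ring
  · rintro ⟨⟨ξ, hξΔ, hpx⟩, z, hz⟩
    have hxi : ∀ i, x i = ξ (v i) := by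
      intro i; rw [← hpx, hp]
    constructor
    · refine ⟨fun i => (-(z i)).toNat, fun i => ?_⟩
      have hle : x i ≤ c i := by rw [hxi i]; rw [hΔ] at hξΔ; exact hξΔ i
      have hzle : z i ≤ 0 := by
        have h1 := hz i
        have : (z i : ℝ) ≤ 0 := by linarith
        exact_mod_cast this
      have : ((-(z i)).toNat : ℤ) = -(z i) := Int.toNat_of_nonneg (by omega)
      rw [hz i]
      have : (((-(z i)).toNat : ℤ) : ℝ) = (-(z i) : ℤ) := by exact_mod_cast this
      push_cast at this ⊢
      linarith [this]
    · intro u hu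
      have : ξ (π u) = 0 := by rw [LinearMap.mem_ker.mp hu, map_zero]
      rw [pi_eq_sum π u] at this
      simp only [map_sum, map_smul, smul_eq_mul] at this
      calc ∑ i, x i * u i = ∑ i, u i * ξ (v i) := by
            refine Finset.sum_congr rfl fun i _ => ?_
            rw [hxi i]; ring
        _ = 0 := by simpa [hπv] using this
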